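/- arXiv:2005.07689 — 10 statements merged into one kernel-verified Lean document; each statement's English description precedes it below -/
import Mathlib

section
/- Let μ ≠ 0, ρ ∈ ℝ and κ₀ ≠ 0 be real numbers. The constant function κ(s) = κ₀ satisfies the Euler–Lagrange equation EL(μ,ρ) if and only if μκ₀² − ρκ₀ + ρμ = 0 (equivalently, κ₀ = (ρ ± √(ρ² − 4μ²ρ))/(2μ) when ρ² − 4μ²ρ ≥ 0). -/
/-- The constant function `κ(s) = κ₀` (with `κ₀ ≠ 0`) satisfies the Euler–Lagrange equation
`EL(μ,ρ)` of the curvature energy `Θ_μ` in the 2-space form of curvature `ρ`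
if and only if `μκ₀² − ρκ₀ + ρμ = 0`. -/
theorem constant_curvature_critical_iff (μ ρ κ₀ : ℝ) (hμ : μ ≠ 0) (hκ : κ₀ ≠ 0) :
    (∀ s : ℝ,
      deriv (deriv (fun _ : ℝ => (1 - μ / κ₀) * Real.exp (μ / κ₀))) s
        + (ρ * (1 - μ / κ₀) - μ * κ₀) * Real.exp (μ / κ₀) = 0)
    ↔ μ * κ₀ ^ 2 - ρ * κ₀ + ρ * μ = 0 := by
  have hd : deriv (deriv (fun _ : ℝ => (1 - μ / κ₀) * Real.exp (μ / κ₀))) = fun _ => 0 := by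
    rw [deriv_const']
    exact deriv_const' 0
  constructor
  · intro h
    have h0 := h 0
    rw [hd] at h0
    simp only at h0
    have he := Real.exp_ne_zero (μ / κ₀)
    have h1 : ρ * (1 - μ / κ₀) - μ * κ₀ = 0 := by
      rw [zero_add] at h0
      rcases mul_eq_zero.mp h0 with h' | h'
      · exact h'
      · exact absurd h' he
    field_simp at h1
    nlinarith [h1]
  · intro h s
    rw [hd]
    have h1 : ρ * (1 - μ / κ₀) - μ * κ₀ = 0 := by
      field_simp
      nlinarith [h]
    rw [h1]
    simp
end

section
/- Let ρ < 0 and μ > 0. The quadratic equation μκ² − ρκ + ρμ = 0 (characterizing constant-curvature critical curves of Θ_μ in the hyperbolic plane H²(ρ)) has exactly two real solutions κ₁ and κ₂; one of them satisfies 0 < κ₂ < √(−ρ), hence κ₂² < −ρ (an hypercycle), and the other satisfies κ₁ < −√(−ρ), hence κ₁² > −ρ (a circle). -/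
/-!
Write `p κ = μκ² − ρκ + ρμ` and `t = √(−ρ)`. Since `μ > 0`, `p` is an upward parabola, and
`p 0 = ρμ < 0`, so it has two roots `κ₁ < κ₂` and is negative exactly between them.
The values `p (−t) = ρt < 0` and `p t = −ρt > 0` then locate the roots: `κ₁ < −t < 0 < κ₂ < t`.
-/

section Quadratic

variable {a b c r₁ r₂ x : ℝ}

theorem exists_lt_and_eq_mul_sub_mul_sub_of_neg (ha : 0 < a) (h : a * x ^ 2 + b * x + c < 0) :
    ∃ r₁ r₂ : ℝ, r₁ < r₂ ∧ ∀ y, a * y ^ 2 + b * y + c = a * (y - r₁) * (y - r₂) := by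
  -- `4a·(a x² + b x + c) = (2ax + b)² − (b² − 4ac)`
  have hd : 0 < b ^ 2 - 4 * a * c := by nlinarith [sq_nonneg (2 * a * x + b)]
  set s := Real.sqrt (b ^ 2 - 4 * a * c)
  have hs : s ^ 2 = b ^ 2 - 4 * a * c := Real.sq_sqrt hd.le
  refine ⟨(-b - s) / (2 * a), (-b + s) / (2 * a), ?_, fun y => ?_⟩
  · have : 0 < s := Real.sqrt_pos.mpr hd
    gcongr
    linarith
  · field_simp
    linear_combination hs

theorem mul_sub_mul_sub_eq_zero_iff (ha : a ≠ 0) :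
    a * (x - r₁) * (x - r₂) = 0 ↔ x = r₁ ∨ x = r₂ := by
  simp only [mul_eq_zero, ha, sub_eq_zero, false_or]

theorem mul_sub_mul_sub_neg_iff (ha : 0 < a) (hr : r₁ ≤ r₂) :
    a * (x - r₁) * (x - r₂) < 0 ↔ r₁ < x ∧ x < r₂ := by
  rw [mul_assoc, ← neg_pos, ← mul_neg, mul_pos_iff_of_pos_left ha, neg_pos, mul_neg_iff]
  constructor
  · rintro (⟨h₁, h₂⟩ | ⟨h₁, h₂⟩) <;> constructor <;> linarith
  · rintro ⟨h₁, h₂⟩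
    exact Or.inl ⟨by linarith, by linarith⟩

theorem mul_sub_mul_sub_pos_iff (ha : 0 < a) (hr : r₁ ≤ r₂) :
    0 < a * (x - r₁) * (x - r₂) ↔ x < r₁ ∨ r₂ < x := by
  rw [mul_assoc, mul_pos_iff_of_pos_left ha, mul_pos_iff]
  constructor
  · rintro (⟨-, h₂⟩ | ⟨h₁, -⟩)
    exacts [Or.inr (by linarith), Or.inl (by linarith)]
  · rintro (h | h)
    exacts [Or.inr ⟨by linarith, by linarith⟩, Or.inl ⟨by linarith, by linarith⟩]

end Quadratic

/-- For `ρ < 0` and `μ > 0`, the quadratic equation `μκ² − ρκ + ρμ = 0` (characterizing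
constant-curvature critical curves of the energy `Θ_μ` in the hyperbolic plane `H²(ρ)`)
has exactly two real solutions `κ₁, κ₂`: one with `0 < κ₂ < √(−ρ)`, hence `κ₂² < −ρ`
(an hypercycle), and one with `κ₁ < −√(−ρ)`, hence `κ₁² > −ρ` (a circle). -/
theorem constant_curvature_critical_hyperbolic (μ ρ : ℝ) (hρ : ρ < 0) (hμ : 0 < μ) :
    ∃ κ₁ κ₂ : ℝ,
      (∀ κ : ℝ, μ * κ ^ 2 - ρ * κ + ρ * μ = 0 ↔ κ = κ₁ ∨ κ = κ₂) ∧
      κ₁ ≠ κ₂ ∧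
      0 < κ₂ ∧ κ₂ < Real.sqrt (-ρ) ∧ κ₂ ^ 2 < -ρ ∧
      κ₁ < -Real.sqrt (-ρ) ∧ κ₁ ^ 2 > -ρ := by
  set t := Real.sqrt (-ρ)
  have ht : t ^ 2 = -ρ := Real.sq_sqrt (by linarith)
  have ht0 : 0 < t := Real.sqrt_pos.mpr (by linarith)
  obtain ⟨κ₁, κ₂, hlt, hfac⟩ :=
    exists_lt_and_eq_mul_sub_mul_sub_of_neg (b := -ρ) (c := ρ * μ) (x := 0) hμ (by nlinarith)
  have hp (κ : ℝ) : μ * κ ^ 2 - ρ * κ + ρ * μ = μ * (κ - κ₁) * (κ - κ₂) := by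
    rw [← hfac]; ring
  have hat_zero := (mul_sub_mul_sub_neg_iff (x := 0) hμ hlt.le).mp (by rw [← hp]; nlinarith)
  have hat_neg_t := (mul_sub_mul_sub_neg_iff (x := -t) hμ hlt.le).mp (by rw [← hp]; nlinarith)
  have hat_t := (mul_sub_mul_sub_pos_iff (x := t) hμ hlt.le).mp (by rw [← hp]; nlinarith)
  have hκ₂ : κ₂ < t := hat_t.resolve_left (by linarith)
  exact ⟨κ₁, κ₂, fun κ => hp κ ▸ mul_sub_mul_sub_eq_zero_iff hμ.ne', hlt.ne, hat_zero.2, hκ₂,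
    by nlinarith, hat_neg_t.1, by nlinarith⟩
end

section
/- Let μ, ρ ∈ ℝ and let b : I → ℝ be a twice differentiable, nowhere-vanishing function on an interval I satisfying (b²)''(s) + b'(s)·(b²)'(s) − 2(ρ(1 − b(s)) − μ²/b(s)) = 0 for all s ∈ I. Then the function f(s) = e^{2b(s)}·(b(s)²·b'(s)² + ρ(1 − b(s))² + μ²) is constant on I. -/
/-!
Differentiating `f = e^{2b}(b²b'² + ρ(1-b)² + μ²)` gives `f' = e^{2b} b' · b · E`, where `E` is the
left-hand side of the Euler–Lagrange equation: multiplying `E` by `b` turns `μ²/b` into `μ²`, and the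
`ρ`-terms `ρ(1-b)² - ρ(1-b)` and `-ρb(1-b)` agree. Hence `f' = 0` on the interior of `I`, while `f`
is continuous on all of `I`, so `f` is constant on the interval `I`.
-/

open Set Filter Topology

theorem Convex.is_const_of_hasDerivAt_interior_zero {D : Set ℝ} {f : ℝ → ℝ} (hD : Convex ℝ D)
    (hf : ContinuousOn f D) (hf' : ∀ x ∈ interior D, HasDerivAt f 0 x)
    {x y : ℝ} (hx : x ∈ D) (hy : y ∈ D) : f x = f y := by
  have hdiff : DifferentiableOn ℝ f (interior D) := fun z hz =>
    (hf' z hz).differentiableAt.differentiableWithinAt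
  have hmono := monotoneOn_of_deriv_nonneg hD hf hdiff fun z hz => (hf' z hz).deriv.ge
  have hanti := antitoneOn_of_deriv_nonpos hD hf hdiff fun z hz => (hf' z hz).deriv.le
  rcases le_total x y with hxy | hxy
  · exact le_antisymm (hmono hx hy hxy) (hanti hx hy hxy)
  · exact le_antisymm (hanti hy hx hxy) (hmono hy hx hxy)

section

variable {b : ℝ → ℝ} {s : ℝ}

theorem deriv_sq_eq (hb : DifferentiableAt ℝ b s) :
    deriv (fun t => b t ^ 2) s = 2 * b s * deriv b s := by
  simpa [mul_comm] using (hb.hasDerivAt.fun_pow 2).deriv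

theorem deriv_deriv_sq_eq (hb : ∀ᶠ t in 𝓝 s, DifferentiableAt ℝ b t)
    (hb' : DifferentiableAt ℝ (deriv b) s) :
    deriv (deriv fun t => b t ^ 2) s = 2 * deriv b s ^ 2 + 2 * b s * deriv (deriv b) s := by
  have hfirst : deriv (fun t => b t ^ 2) =ᶠ[𝓝 s] fun t => 2 * b t * deriv b t :=
    hb.mono fun t ht => deriv_sq_eq ht
  rw [hfirst.deriv_eq, ((hb.self_of_nhds.hasDerivAt.const_mul 2).fun_mul hb'.hasDerivAt).deriv]
  ring

end

noncomputable def eulerLagrange (μ ρ : ℝ) (b : ℝ → ℝ) (s : ℝ) : ℝ :=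
  deriv (deriv fun t => b t ^ 2) s + deriv b s * deriv (fun t => b t ^ 2) s
    - 2 * (ρ * (1 - b s) - μ ^ 2 / b s)

noncomputable def firstIntegral (μ ρ : ℝ) (b : ℝ → ℝ) (s : ℝ) : ℝ :=
  Real.exp (2 * b s) * (b s ^ 2 * deriv b s ^ 2 + ρ * (1 - b s) ^ 2 + μ ^ 2)

section

variable {μ ρ : ℝ} {b : ℝ → ℝ} {s : ℝ}

theorem continuousAt_firstIntegral (hb : DifferentiableAt ℝ b s)
    (hb' : DifferentiableAt ℝ (deriv b) s) : ContinuousAt (firstIntegral μ ρ b) s := by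
  have := hb.continuousAt
  have := hb'.continuousAt
  unfold firstIntegral
  fun_prop

theorem hasDerivAt_firstIntegral (hb : ∀ᶠ t in 𝓝 s, DifferentiableAt ℝ b t)
    (hb' : DifferentiableAt ℝ (deriv b) s) (hb0 : b s ≠ 0) :
    HasDerivAt (firstIntegral μ ρ b)
      (Real.exp (2 * b s) * deriv b s * b s * eulerLagrange μ ρ b s) s := by
  have hbs := hb.self_of_nhds.hasDerivAt
  have hchain := ((hbs.const_mul 2).exp).fun_mul
    ((((hbs.fun_pow 2).fun_mul (hb'.hasDerivAt.fun_pow 2)).fun_add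
      ((((hasDerivAt_const s (1 : ℝ)).fun_sub hbs).fun_pow 2).const_mul ρ)).add_const (μ ^ 2))
  refine hchain.congr_deriv ?_
  unfold eulerLagrange
  rw [deriv_deriv_sq_eq hb hb', deriv_sq_eq hb.self_of_nhds]
  field_simp
  ring

end

theorem first_integral_in_b_general (μ ρ : ℝ) (I : Set ℝ)
    (hIconn : I.OrdConnected)
    (b : ℝ → ℝ) (hb0 : ∀ s ∈ I, b s ≠ 0)
    (hb1 : ∀ s ∈ I, DifferentiableAt ℝ b s)
    (hb2 : ∀ s ∈ I, DifferentiableAt ℝ (deriv b) s)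
    (hode : ∀ s ∈ I,
      deriv (deriv (fun t => (b t) ^ 2)) s + deriv b s * deriv (fun t => (b t) ^ 2) s
        - 2 * (ρ * (1 - b s) - μ ^ 2 / b s) = 0) :
    ∀ s ∈ I, ∀ t ∈ I,
      Real.exp (2 * b s) * ((b s) ^ 2 * (deriv b s) ^ 2 + ρ * (1 - b s) ^ 2 + μ ^ 2)
        = Real.exp (2 * b t) * ((b t) ^ 2 * (deriv b t) ^ 2 + ρ * (1 - b t) ^ 2 + μ ^ 2) := by
  intro s hs t ht
  show firstIntegral μ ρ b s = firstIntegral μ ρ b t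
  refine hIconn.convex.is_const_of_hasDerivAt_interior_zero (fun x hx => ?_) (fun x hx => ?_) hs ht
  · exact (continuousAt_firstIntegral (hb1 x hx) (hb2 x hx)).continuousWithinAt
  · have hxI := interior_subset hx
    have hb1_near : ∀ᶠ y in 𝓝 x, DifferentiableAt ℝ b y :=
      eventually_of_mem (mem_interior_iff_mem_nhds.1 hx) hb1
    simpa only [show eulerLagrange μ ρ b x = 0 from hode x hxI, mul_zero] using
      hasDerivAt_firstIntegral (μ := μ) (ρ := ρ) hb1_near (hb2 x hxI) (hb0 x hxI)

/-- If a twice differentiable nowhere-vanishing function `b` on an interval `I` satisfies the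
Euler–Lagrange equation `(b²)'' + b'(b²)' − 2(ρ(1−b) − μ²/b) = 0` (the equation of the
curvature energy `Θ_μ` in the 2-space form of curvature `ρ`, in the variable `b = μ/κ`),
then `f(s) = e^{2b}(b²(b')² + ρ(1−b)² + μ²)` is constant on `I`. -/
theorem first_integral_in_b (μ ρ : ℝ) (I : Set ℝ) (hIopen : IsOpen I)
    (hIconn : I.OrdConnected)
    (b : ℝ → ℝ) (hb0 : ∀ s ∈ I, b s ≠ 0)
    (hb1 : ∀ s ∈ I, DifferentiableAt ℝ b s)
    (hb2 : ∀ s ∈ I, DifferentiableAt ℝ (deriv b) s)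
    (hode : ∀ s ∈ I,
      deriv (deriv (fun t => (b t) ^ 2)) s + deriv b s * deriv (fun t => (b t) ^ 2) s
        - 2 * (ρ * (1 - b s) - μ ^ 2 / b s) = 0) :
    ∀ s ∈ I, ∀ t ∈ I,
      Real.exp (2 * b s) * ((b s) ^ 2 * (deriv b s) ^ 2 + ρ * (1 - b s) ^ 2 + μ ^ 2)
        = Real.exp (2 * b t) * ((b t) ^ 2 * (deriv b t) ^ 2 + ρ * (1 - b t) ^ 2 + μ ^ 2) :=
  first_integral_in_b_general μ ρ I hIconn b hb0 hb1 hb2 hode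
end

section
/- Let μ ≠ 0, ρ ∈ ℝ, and let κ : I → ℝ be a twice differentiable nowhere-vanishing function on an interval I satisfying the Euler–Lagrange equation EL(μ,ρ). Then there exists a constant d ∈ ℝ such that for all s ∈ I, κ'(s)² = (κ(s)⁴/μ⁴)·(d·κ(s)²·e^{−2μ/κ(s)} − μ²κ(s)² − ρ(κ(s) − μ)²). -/
/-!
Writing `u = μ / κ`, the Euler–Lagrange equation reads `w' + R = 0`, where
`w = ((1 - u) e^u)' = μ² κ' e^u / κ³` and `R = (ρ (1 - u) - μ κ) e^u`. The product `2 w R` is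
the derivative of `P = e^{2u} (ρ (u - 1)² + μ²)`, so multiplying the equation by `2 w` shows that
the energy `w² + P` is constant on the interval; solving `w² + P = d` for `κ'²` gives the claim.
-/

open Real

theorem IsOpen.exists_sq_add_eq_const_of_deriv_add_eq_zero {I : Set ℝ} (hI : IsOpen I)
    (hI' : IsPreconnected I) {w R P : ℝ → ℝ} (hw : ∀ s ∈ I, DifferentiableAt ℝ w s)
    (hP : ∀ s ∈ I, HasDerivAt P (2 * w s * R s) s) (hwR : ∀ s ∈ I, deriv w s + R s = 0) :
    ∃ c, ∀ s ∈ I, w s ^ 2 + P s = c := by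
  have hE : ∀ s ∈ I, HasDerivAt (fun t => w t ^ 2 + P t) 0 s := fun s hs =>
    (((hw s hs).hasDerivAt.pow 2).add (hP s hs)).congr_deriv
      (by linear_combination 2 * w s * hwR s hs)
  exact hI.exists_is_const_of_deriv_eq_zero hI'
    (fun s hs => (hE s hs).differentiableAt.differentiableWithinAt)
    (fun s hs => (hE s hs).deriv)

section

variable {κ : ℝ → ℝ} {κ' μ s : ℝ}

theorem HasDerivAt.const_div (μ : ℝ) (hκ : HasDerivAt κ κ' s) (hs : κ s ≠ 0) :
    HasDerivAt (fun t => μ / κ t) (-(μ * κ') / κ s ^ 2) s := by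
  simpa using (hasDerivAt_const s μ).fun_div hκ hs

theorem hasDerivAt_one_sub_div_mul_exp_div (hκ : HasDerivAt κ κ' s) (hs : κ s ≠ 0) :
    HasDerivAt (fun t => (1 - μ / κ t) * exp (μ / κ t))
      (μ ^ 2 * κ' * exp (μ / κ s) / κ s ^ 3) s := by
  have hu := hκ.const_div μ hs
  refine (((hasDerivAt_const s 1).fun_sub hu).fun_mul hu.exp).congr_deriv ?_
  generalize exp (μ / κ s) = E
  field_simp
  ring

theorem hasDerivAt_exp_div_sq_mul (ρ : ℝ) (hκ : HasDerivAt κ κ' s) (hs : κ s ≠ 0) :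
    HasDerivAt (fun t => exp (μ / κ t) ^ 2 * (ρ * (μ / κ t - 1) ^ 2 + μ ^ 2))
      (2 * (μ ^ 2 * κ' * exp (μ / κ s) / κ s ^ 3)
        * ((ρ * (1 - μ / κ s) - μ * κ s) * exp (μ / κ s))) s := by
  have hu := hκ.const_div μ hs
  have hV := (((hu.sub_const 1).fun_pow 2).const_mul ρ).add_const (μ ^ 2)
  refine ((hu.exp.fun_pow 2).fun_mul hV).congr_deriv ?_
  generalize exp (μ / κ s) = E
  simp only [Nat.cast_ofNat, Nat.add_one_sub_one, pow_one]
  field_simp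
  ring

end

theorem sq_eq_of_energy_eq {k k' μ ρ d : ℝ} (hμ : μ ≠ 0) (hk : k ≠ 0)
    (h : (μ ^ 2 * k' * exp (μ / k) / k ^ 3) ^ 2
      + exp (μ / k) ^ 2 * (ρ * (μ / k - 1) ^ 2 + μ ^ 2) = d) :
    k' ^ 2 = k ^ 4 / μ ^ 4 *
      (d * k ^ 2 * exp (-2 * μ / k) - μ ^ 2 * k ^ 2 - ρ * (k - μ) ^ 2) := by
  have hexp : exp (-2 * μ / k) = (exp (μ / k) ^ 2)⁻¹ := by
    rw [← exp_nat_mul, ← exp_neg]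
    ring_nf
  rw [hexp, ← h]
  field_simp
  ring

/-- If a twice differentiable nowhere-vanishing function `κ` on an interval `I` satisfies the
Euler–Lagrange equation `EL(μ,ρ)` of the curvature energy `Θ_μ` in the 2-space form of
curvature `ρ`, then there is a constant `d` such that
`κ'² = (κ⁴/μ⁴)(dκ²e^{−2μ/κ} − μ²κ² − ρ(κ−μ)²)` on `I`. -/
theorem first_integral_of_EL (μ ρ : ℝ) (hμ : μ ≠ 0) (I : Set ℝ) (hIopen : IsOpen I)
    (hIconn : I.OrdConnected)
    (κ : ℝ → ℝ) (hκ0 : ∀ s ∈ I, κ s ≠ 0)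
    (hκ1 : ∀ s ∈ I, DifferentiableAt ℝ κ s)
    (hκ2 : ∀ s ∈ I, DifferentiableAt ℝ (deriv κ) s)
    (hEL : ∀ s ∈ I,
      deriv (deriv (fun t => (1 - μ / κ t) * Real.exp (μ / κ t))) s
        + (ρ * (1 - μ / κ s) - μ * κ s) * Real.exp (μ / κ s) = 0) :
    ∃ d : ℝ, ∀ s ∈ I,
      (deriv κ s) ^ 2 =
        (κ s) ^ 4 / μ ^ 4 *
          (d * (κ s) ^ 2 * Real.exp (-2 * μ / κ s) - μ ^ 2 * (κ s) ^ 2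
            - ρ * (κ s - μ) ^ 2) := by
  have hF : ∀ s ∈ I, HasDerivAt (fun t => (1 - μ / κ t) * exp (μ / κ t))
      (μ ^ 2 * deriv κ s * exp (μ / κ s) / κ s ^ 3) s := fun s hs =>
    hasDerivAt_one_sub_div_mul_exp_div (hκ1 s hs).hasDerivAt (hκ0 s hs)
  obtain ⟨d, hd⟩ := hIopen.exists_sq_add_eq_const_of_deriv_add_eq_zero hIconn.isPreconnected
    (w := fun t => μ ^ 2 * deriv κ t * exp (μ / κ t) / κ t ^ 3)
    (fun s hs => by
      have := hκ1 s hs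
      have := hκ2 s hs
      fun_prop (disch := simp [hκ0 s hs]))
    (fun s hs => hasDerivAt_exp_div_sq_mul ρ (hκ1 s hs).hasDerivAt (hκ0 s hs))
    (fun s hs => by
      rw [← Filter.EventuallyEq.deriv_eq
        (Filter.eventually_of_mem (hIopen.mem_nhds hs) fun t ht => (hF t ht).deriv)]
      exact hEL s hs)
  exact ⟨d, fun s hs => sq_eq_of_energy_eq hμ (hκ0 s hs) (hd s hs)⟩
end

section
/- Let μ ≠ 0, ρ ∈ ℝ, and let κ : I → ℝ be a twice differentiable nowhere-vanishing function on an interval I satisfying the Euler–Lagrange equation EL(μ,ρ). Then x(s) := exp(μ/κ(s)) takes values in (0,∞)\{1} and satisfies the second-order equation x''(s) = (−μ²x² − ρx²(log x)² + ρx² log x − (x')² log x)/(x (log x)²) (all functions evaluated at s), i.e. (x, x') solves the phase-plane system x' = y, y' = Q₂(x,y) with Q₂(x,y) = (−μ²x² − ρx²(log x)² + ρx² log x − y² log x)/(x(log x)²). -/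
/-- The second component `Q₂(x,y)` of the phase-plane vector field associated to the
Euler–Lagrange equation of the curvature energy `Θ_μ` in the 2-space form of curvature `ρ`,
in the variables `x = e^{μ/κ}`, `y = x'`. -/
noncomputable def phaseQ₂ (μ ρ x y : ℝ) : ℝ :=
  (-μ ^ 2 * x ^ 2 - ρ * x ^ 2 * (Real.log x) ^ 2 + ρ * x ^ 2 * Real.log x
    - y ^ 2 * Real.log x) / (x * (Real.log x) ^ 2)

/-!
With `u = μ/κ` and `x = e^u`, the function `(1 - u) e^u` of the Euler–Lagrange equation has
derivative `-u e^u u' = -(log x) x'`, so its second derivative is `-(x'²/x + (log x) x'')`.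
Substituting this and `μκ = μ²/log x` into `EL(μ,ρ)` leaves an equation that is linear in `x''`
with leading coefficient `-log x = -μ/κ ≠ 0`, and solving it gives `x'' = Q₂(x, x')`.
-/

open Filter Topology Real

/-- Differentiability near `s`, not only at `s`, is what keeps `deriv (deriv f) s` from being
a junk value. -/
def TwiceDifferentiableAt (f : ℝ → ℝ) (s : ℝ) : Prop :=
  (∀ᶠ t in 𝓝 s, DifferentiableAt ℝ f t) ∧ DifferentiableAt ℝ (deriv f) s

namespace TwiceDifferentiableAt

variable {f : ℝ → ℝ} {s : ℝ}

theorem const_div (hf : TwiceDifferentiableAt f s) (c : ℝ) (hs : f s ≠ 0) :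
    TwiceDifferentiableAt (fun t => c / f t) s := by
  have hne : ∀ᶠ t in 𝓝 s, f t ≠ 0 :=
    hf.1.self_of_nhds.continuousAt.eventually_ne hs
  have hderiv : deriv (fun t => c / f t) =ᶠ[𝓝 s] fun t => -c * deriv f t / f t ^ 2 := by
    filter_upwards [hf.1, hne] with t hft hnet
    exact deriv_const_div c hft hnet
  refine ⟨?_, ?_⟩
  · filter_upwards [hf.1, hne] with t hft hnet
    exact (differentiableAt_const c).div hft hnet
  · exact hderiv.differentiableAt_iff.mpr <|
      ((differentiableAt_const _).mul hf.2).div (hf.1.self_of_nhds.pow 2) (pow_ne_zero 2 hs)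

theorem exp (hf : TwiceDifferentiableAt f s) :
    TwiceDifferentiableAt (fun t => Real.exp (f t)) s := by
  have hderiv : deriv (fun t => Real.exp (f t)) =ᶠ[𝓝 s] fun t => Real.exp (f t) * deriv f t :=
    hf.1.mono fun t hft => deriv_exp hft
  refine ⟨hf.1.mono fun t hft => hft.exp, ?_⟩
  exact hderiv.differentiableAt_iff.mpr (hf.1.self_of_nhds.exp.mul hf.2)

end TwiceDifferentiableAt

theorem deriv_one_sub_mul_exp {u : ℝ → ℝ} {t : ℝ} (hu : DifferentiableAt ℝ u t) :
    deriv (fun t => (1 - u t) * exp (u t)) t = -u t * deriv (fun t => exp (u t)) t := by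
  have h : HasDerivAt (fun t => (1 - u t) * exp (u t))
      ((0 - deriv u t) * exp (u t) + (1 - u t) * (exp (u t) * deriv u t)) t :=
    ((hasDerivAt_const t (1 : ℝ)).sub hu.hasDerivAt).mul hu.hasDerivAt.exp
  rw [h.deriv, deriv_exp hu]
  ring

theorem deriv_deriv_one_sub_mul_exp {u : ℝ → ℝ} {s : ℝ} (hu : TwiceDifferentiableAt u s) :
    deriv (deriv fun t => (1 - u t) * exp (u t)) s =
      -((deriv (fun t => exp (u t)) s) ^ 2 / exp (u s)
        + u s * deriv (deriv fun t => exp (u t)) s) := by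
  have hderiv : deriv (fun t => (1 - u t) * exp (u t)) =ᶠ[𝓝 s]
      fun t => -u t * deriv (fun t => exp (u t)) t :=
    hu.1.mono fun t hut => deriv_one_sub_mul_exp hut
  have h : HasDerivAt (fun t => -u t * deriv (fun t => exp (u t)) t)
      (-deriv u s * deriv (fun t => exp (u t)) s + -u s * deriv (deriv fun t => exp (u t)) s) s :=
    hu.1.self_of_nhds.hasDerivAt.neg.mul hu.exp.2.hasDerivAt
  rw [hderiv.deriv_eq, h.deriv, deriv_exp hu.1.self_of_nhds]
  field_simp
  ring

theorem eq_phaseQ₂_of_euler_lagrange {μ ρ k y z : ℝ} (hμ : μ ≠ 0) (hk : k ≠ 0)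
    (h : -(y ^ 2 / exp (μ / k) + μ / k * z) + (ρ * (1 - μ / k) - μ * k) * exp (μ / k) = 0) :
    z = phaseQ₂ μ ρ (exp (μ / k)) y := by
  rw [phaseQ₂, log_exp]
  field_simp at h ⊢
  linear_combination -h

theorem EL_phase_plane_general (μ ρ : ℝ) (hμ : μ ≠ 0) (I : Set ℝ) (hIopen : IsOpen I)
    (κ : ℝ → ℝ) (hκ0 : ∀ s ∈ I, κ s ≠ 0)
    (hκ1 : ∀ s ∈ I, DifferentiableAt ℝ κ s)
    (hκ2 : ∀ s ∈ I, DifferentiableAt ℝ (deriv κ) s)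
    (hEL : ∀ s ∈ I,
      deriv (deriv (fun t => (1 - μ / κ t) * Real.exp (μ / κ t))) s
        + (ρ * (1 - μ / κ s) - μ * κ s) * Real.exp (μ / κ s) = 0) :
    ∀ s ∈ I,
      Real.exp (μ / κ s) ∈ Set.Ioi (0 : ℝ) \ {1} ∧
      deriv (deriv (fun t => Real.exp (μ / κ t))) s =
        phaseQ₂ μ ρ (Real.exp (μ / κ s)) (deriv (fun t => Real.exp (μ / κ t)) s) := by
  intro s hs
  have hκ : TwiceDifferentiableAt κ s := ⟨eventually_of_mem (hIopen.mem_nhds hs) hκ1, hκ2 s hs⟩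
  have hEL_s := hEL s hs
  rw [deriv_deriv_one_sub_mul_exp (hκ.const_div μ (hκ0 s hs))] at hEL_s
  refine ⟨⟨exp_pos _, ?_⟩, eq_phaseQ₂_of_euler_lagrange hμ (hκ0 s hs) hEL_s⟩
  exact mt (Real.exp_eq_one_iff _).mp (div_ne_zero hμ (hκ0 s hs))

/-- If a twice differentiable nowhere-vanishing `κ` on an interval `I` satisfies the
Euler–Lagrange equation `EL(μ,ρ)`, then `x = e^{μ/κ}` takes values in `(0,∞) \ {1}` and
`(x, x')` solves the phase-plane system `x' = y`, `y' = Q₂(x,y)`. -/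
theorem EL_phase_plane (μ ρ : ℝ) (hμ : μ ≠ 0) (I : Set ℝ) (hIopen : IsOpen I)
    (hIconn : I.OrdConnected)
    (κ : ℝ → ℝ) (hκ0 : ∀ s ∈ I, κ s ≠ 0)
    (hκ1 : ∀ s ∈ I, DifferentiableAt ℝ κ s)
    (hκ2 : ∀ s ∈ I, DifferentiableAt ℝ (deriv κ) s)
    (hEL : ∀ s ∈ I,
      deriv (deriv (fun t => (1 - μ / κ t) * Real.exp (μ / κ t))) s
        + (ρ * (1 - μ / κ s) - μ * κ s) * Real.exp (μ / κ s) = 0) :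
    ∀ s ∈ I,
      Real.exp (μ / κ s) ∈ Set.Ioi (0 : ℝ) \ {1} ∧
      deriv (deriv (fun t => Real.exp (μ / κ t))) s =
        phaseQ₂ μ ρ (Real.exp (μ / κ s)) (deriv (fun t => Real.exp (μ / κ t)) s) :=
  EL_phase_plane_general μ ρ hμ I hIopen κ hκ0 hκ1 hκ2 hEL
end

section
/- Let μ ≠ 0, ρ ∈ ℝ, and let x : I → ℝ be a twice differentiable function on an interval I with x(s) > 0 and x(s) ≠ 1 for all s, satisfying x''(s) = Q₂(x(s), x'(s)) where Q₂(x,y) = (−μ²x² − ρx²(log x)² + ρx² log x − y² log x)/(x(log x)²). Then the function s ↦ F(x(s), x'(s)), where F(x,y) = y²(log x)² + μ²x² + ρ(1 − log x)²x², is constant on I; moreover, if ρ ≥ 0 then this constant is positive. -/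
/-- The first integral `F(x,y) = y²(log x)² + μ²x² + ρ(1 − log x)²x²` of the phase-plane
system; its level sets are the orbits. -/
noncomputable def phaseF (μ ρ x y : ℝ) : ℝ :=
  y ^ 2 * (Real.log x) ^ 2 + μ ^ 2 * x ^ 2 + ρ * (1 - Real.log x) ^ 2 * x ^ 2


/- Along a solution (`x' = y`, `y' = Q₂`) the derivative of `F(x, y)` factors as
`2 y (Q₂ L² + y² L / x + μ² x − ρ L (1 − L) x)` with `L = log x`, and clearing the
denominator of `Q₂` shows that the bracket vanishes identically. -/

open Real

theorem phaseQ₂_mul_log_sq (μ ρ : ℝ) {x : ℝ} (hx : x ≠ 0) (hlog : log x ≠ 0) (y : ℝ) :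
    phaseQ₂ μ ρ x y * log x ^ 2
      = -(y ^ 2 * log x / x + μ ^ 2 * x - ρ * log x * (1 - log x) * x) := by
  unfold phaseQ₂
  field_simp
  ring

theorem hasDerivAt_phaseF_comp (μ ρ : ℝ) {u v : ℝ → ℝ} {u' v' s : ℝ}
    (hu : HasDerivAt u u' s) (hv : HasDerivAt v v' s) (hus : u s ≠ 0) :
    HasDerivAt (fun t => phaseF μ ρ (u t) (v t))
      (2 * v s * v' * log (u s) ^ 2 + 2 * v s ^ 2 * log (u s) * u' / u s
        + 2 * μ ^ 2 * u s * u' - 2 * ρ * log (u s) * (1 - log (u s)) * u s * u') s := by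
  have hlog := hu.log hus
  have := ((hv.pow 2).mul (hlog.pow 2)).add (((hu.pow 2).const_mul (μ ^ 2)).add
    ((((hasDerivAt_const s 1).sub hlog).pow 2).const_mul ρ |>.mul (hu.pow 2)))
  refine (this.congr_deriv ?_).congr_of_eventuallyEq (.of_forall fun t => ?_)
  · simp only [Pi.pow_apply, Pi.sub_apply]
    field_simp
    ring
  · simp only [phaseF, Pi.add_apply, Pi.mul_apply, Pi.pow_apply, Pi.sub_apply]
    ring

theorem phaseF_pos {μ ρ x : ℝ} (hμ : μ ≠ 0) (hρ : 0 ≤ ρ) (hx : x ≠ 0) (y : ℝ) :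
    0 < phaseF μ ρ x y := by
  unfold phaseF
  positivity

/-- If a twice differentiable function `x` on an interval `I`, with values in `(0,∞) \ {1}`,
satisfies `x'' = Q₂(x, x')`, then `s ↦ F(x(s), x'(s))` is constant on `I`; if moreover
`ρ ≥ 0`, this constant is positive. -/
theorem phase_first_integral (μ ρ : ℝ) (hμ : μ ≠ 0) (I : Set ℝ) (hIopen : IsOpen I)
    (hIconn : I.OrdConnected)
    (x : ℝ → ℝ) (hxpos : ∀ s ∈ I, 0 < x s) (hx1 : ∀ s ∈ I, x s ≠ 1)
    (hx1' : ∀ s ∈ I, DifferentiableAt ℝ x s)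
    (hx2' : ∀ s ∈ I, DifferentiableAt ℝ (deriv x) s)
    (hode : ∀ s ∈ I, deriv (deriv x) s = phaseQ₂ μ ρ (x s) (deriv x s)) :
    (∀ s ∈ I, ∀ t ∈ I, phaseF μ ρ (x s) (deriv x s) = phaseF μ ρ (x t) (deriv x t)) ∧
    (0 ≤ ρ → ∀ s ∈ I, 0 < phaseF μ ρ (x s) (deriv x s)) := by
  have hderiv : ∀ s ∈ I, HasDerivAt (fun t => phaseF μ ρ (x t) (deriv x t)) 0 s := by
    intro s hs
    have hx0 : x s ≠ 0 := (hxpos s hs).ne'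
    have hlog : log (x s) ≠ 0 := log_ne_zero_of_pos_of_ne_one (hxpos s hs) (hx1 s hs)
    have hQ := phaseQ₂_mul_log_sq μ ρ hx0 hlog (deriv x s)
    convert hasDerivAt_phaseF_comp μ ρ (hx1' s hs).hasDerivAt
      (hode s hs ▸ (hx2' s hs).hasDerivAt) hx0 using 1
    linear_combination (-2 * deriv x s) * hQ
  refine ⟨fun s hs t ht => ?_, fun hρ s hs => phaseF_pos hμ hρ (hxpos s hs).ne' _⟩
  exact hIopen.is_const_of_deriv_eq_zero hIconn.isPreconnected
    (fun z hz => (hderiv z hz).differentiableAt.differentiableWithinAt)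
    (fun z hz => (hderiv z hz).deriv) hs ht
end

section
/- Let ρ ≠ 0 and μ ≠ 0 with D := ρ² − 4μ²ρ > 0, and set t_± = (ρ ± √D)/(2ρ), x_± = e^{t_±}. Define h(x) := x·(ρ·log x·(1 − log x) − μ²)/(log x)² for x > 0, x ≠ 1 (so h(x) = Q₂(x,0)). Then h(x_+) = h(x_−) = 0, and the derivative of h satisfies h'(x_+) = −√D/t_+² < 0 and h'(x_−) = +√D/t_−² > 0. Consequently the linearization matrix [[0,1],[h'(x_±),0]] of the phase-plane system at the singular point (x_+,0) has two purely imaginary eigenvalues (a centre), while at (x_−,0) it has two real eigenvalues of opposite sign (a saddle point). -/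
/-!
The singular abscissae are `x = e^t` with `t` a root of `q(t) = ρ t (1 - t) - μ²`, and the
quadratic formula gives exactly `t_±`. Writing `h(x) = x φ(log x)` with `φ(t) = q(t)/t²`, the
chain rule gives `h'(e^t) = φ(t) + φ'(t)`, which at a root of `q` is `q'(t)/t² = ρ(1 - 2t)/t²`;
at `t_±` the numerator is `∓√D`. The characteristic polynomial of `[[0,1],[c,0]]` is `z² - c`,
whose roots are `±i√(-c)` for `c < 0` and `±√c` for `c > 0`.
-/

open Real

theorem HasDerivAt.div_of_eq_zero {𝕜 : Type*} [NontriviallyNormedField 𝕜] {f g : 𝕜 → 𝕜}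
    {f' g' x : 𝕜} (hf : HasDerivAt f f' x) (hg : HasDerivAt g g' x) (hgx : g x ≠ 0)
    (hfx : f x = 0) : HasDerivAt (fun y => f y / g y) (f' / g x) x := by
  refine (hf.div hg hgx).congr_deriv ?_
  rw [hfx, zero_mul, sub_zero, sq, mul_div_mul_right _ _ hgx]

theorem hasDerivAt_mul_comp_log {φ : ℝ → ℝ} {φ' x : ℝ} (hx : 0 < x)
    (hφ : HasDerivAt φ φ' (log x)) :
    HasDerivAt (fun y => y * φ (log y)) (φ (log x) + φ') x := by
  refine ((hasDerivAt_id x).mul (hφ.comp x (hasDerivAt_log hx.ne'))).congr_deriv ?_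
  simp only [Function.comp_apply, id]
  field_simp

theorem ne_zero_of_mul_mul_one_sub_sub_sq_eq_zero {ρ μ t : ℝ} (hμ : μ ≠ 0)
    (ht : ρ * t * (1 - t) - μ ^ 2 = 0) : t ≠ 0 := by
  rintro rfl
  exact hμ (pow_eq_zero_iff two_ne_zero |>.mp (by linarith))

theorem mul_mul_one_sub_sub_sq_eq_zero_iff {ρ μ D : ℝ} (hρ : ρ ≠ 0)
    (hD : D = ρ ^ 2 - 4 * μ ^ 2 * ρ) (hDnonneg : 0 ≤ D) (t : ℝ) :
    ρ * t * (1 - t) - μ ^ 2 = 0 ↔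
      t = (ρ + √D) / (2 * ρ) ∨ t = (ρ - √D) / (2 * ρ) := by
  have hdiscrim : discrim ρ (-ρ) (μ ^ 2) = √D * √D := by
    rw [mul_self_sqrt hDnonneg, discrim, hD]
    ring
  have hformula := quadratic_eq_zero_iff hρ hdiscrim t
  rw [neg_neg] at hformula
  rw [← hformula]
  constructor <;> intro h <;> linear_combination -h

theorem hasDerivAt_exp_of_mul_mul_one_sub_sub_sq_eq_zero {ρ μ t : ℝ} (ht0 : t ≠ 0)
    (ht : ρ * t * (1 - t) - μ ^ 2 = 0) :
    HasDerivAt (fun x => x * (ρ * log x * (1 - log x) - μ ^ 2) / (log x) ^ 2)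
      (ρ * (1 - 2 * t) / t ^ 2) (exp t) := by
  have hq : HasDerivAt (fun s => ρ * s * (1 - s) - μ ^ 2) (ρ * (1 - 2 * t)) t := by
    refine ((((hasDerivAt_id t).const_mul ρ).mul ((hasDerivAt_id t).const_sub 1)).sub_const
      (μ ^ 2)).congr_deriv ?_
    simp only [id]
    ring
  have hφ := hq.div_of_eq_zero (hasDerivAt_pow 2 t) (pow_ne_zero 2 ht0) ht
  have h := hasDerivAt_mul_comp_log (exp_pos t) (by rwa [log_exp])
  simp only [log_exp, ht, zero_div, zero_add] at h
  simpa only [mul_div_assoc] using h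

theorem det_smul_one_sub_of_companion {R : Type*} [CommRing R] (z c : R) :
    Matrix.det (z • (1 : Matrix (Fin 2) (Fin 2) R) - !![0, 1; c, 0]) = z ^ 2 - c := by
  simp [Matrix.det_fin_two, sq]

theorem sq_sub_ofReal_eq_zero_iff_of_neg {c : ℝ} (hc : c < 0) (z : ℂ) :
    z ^ 2 - c = 0 ↔ z = Complex.I * √(-c) ∨ z = -(Complex.I * √(-c)) := by
  have hsq : (Complex.I * √(-c)) ^ 2 = c := by
    rw [mul_pow, Complex.I_sq, ← Complex.ofReal_pow, sq_sqrt (neg_nonneg.mpr hc.le)]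
    push_cast
    ring
  rw [sub_eq_zero, ← hsq, sq_eq_sq_iff_eq_or_eq_neg]

theorem sq_sub_ofReal_eq_zero_iff_of_pos {c : ℝ} (hc : 0 < c) (z : ℂ) :
    z ^ 2 - c = 0 ↔ z = ((-√c : ℝ) : ℂ) ∨ z = (√c : ℂ) := by
  have hsq : ((√c : ℝ) : ℂ) ^ 2 = c := by
    rw [← Complex.ofReal_pow, sq_sqrt hc.le]
  rw [sub_eq_zero, ← hsq, sq_eq_sq_iff_eq_or_eq_neg, Complex.ofReal_neg, or_comm]

/-- Let `D = ρ² − 4μ²ρ > 0`, `t_± = (ρ ± √D)/(2ρ)`, `x_± = e^{t_±}`, and let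
`h(x) = x(ρ log x (1 − log x) − μ²)/(log x)²` (that is, `h(x) = Q₂(x,0)` for the
phase-plane field of the curvature energy `Θ_μ` in the 2-space form of curvature `ρ`).
Then `h(x₊) = h(x₋) = 0`, `h'(x₊) = −√D/t₊² < 0`, `h'(x₋) = √D/t₋² > 0`, and the
linearization matrix `[[0,1],[h'(x_±),0]]` of the system at `(x₊,0)` has two purely
imaginary eigenvalues (a centre), while at `(x₋,0)` it has two real eigenvalues of
opposite sign (a saddle point). -/
theorem linearization_at_singular_points (μ ρ : ℝ) (hρ : ρ ≠ 0) (hμ : μ ≠ 0)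
    (D tp tm xp xm : ℝ) (hD : D = ρ ^ 2 - 4 * μ ^ 2 * ρ) (hDpos : 0 < D)
    (htp : tp = (ρ + Real.sqrt D) / (2 * ρ)) (htm : tm = (ρ - Real.sqrt D) / (2 * ρ))
    (hxp : xp = Real.exp tp) (hxm : xm = Real.exp tm)
    (h : ℝ → ℝ)
    (hh : h = fun x => x * (ρ * Real.log x * (1 - Real.log x) - μ ^ 2) / (Real.log x) ^ 2) :
    h xp = 0 ∧ h xm = 0 ∧
    deriv h xp = -Real.sqrt D / tp ^ 2 ∧ deriv h xp < 0 ∧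
    deriv h xm = Real.sqrt D / tm ^ 2 ∧ 0 < deriv h xm ∧
    (∃ ω : ℝ, ω ≠ 0 ∧ ∀ z : ℂ,
      Matrix.det (z • (1 : Matrix (Fin 2) (Fin 2) ℂ)
          - !![0, 1; Complex.ofReal (deriv h xp), 0]) = 0 ↔
        z = Complex.I * ω ∨ z = -(Complex.I * ω)) ∧
    (∃ a b : ℝ, a < 0 ∧ 0 < b ∧ ∀ z : ℂ,
      Matrix.det (z • (1 : Matrix (Fin 2) (Fin 2) ℂ)
          - !![0, 1; Complex.ofReal (deriv h xm), 0]) = 0 ↔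
        z = (a : ℂ) ∨ z = (b : ℂ)) := by
  subst hxp hxm
  have hroot := mul_mul_one_sub_sub_sq_eq_zero_iff hρ hD hDpos.le
  have hrp := (hroot tp).mpr (.inl htp)
  have hrm := (hroot tm).mpr (.inr htm)
  have hsqrt : 0 < √D := sqrt_pos.mpr hDpos
  have hderiv {t : ℝ} (ht : ρ * t * (1 - t) - μ ^ 2 = 0) :
      deriv h (exp t) = ρ * (1 - 2 * t) / t ^ 2 :=
    hh ▸ (hasDerivAt_exp_of_mul_mul_one_sub_sub_sq_eq_zero
      (ne_zero_of_mul_mul_one_sub_sub_sq_eq_zero hμ ht) ht).deriv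
  have hdp : deriv h (exp tp) = -√D / tp ^ 2 := by
    rw [hderiv hrp, htp]
    field_simp
    ring
  have hdm : deriv h (exp tm) = √D / tm ^ 2 := by
    rw [hderiv hrm, htm]
    field_simp
    ring
  have htp0 := ne_zero_of_mul_mul_one_sub_sub_sq_eq_zero hμ hrp
  have htm0 := ne_zero_of_mul_mul_one_sub_sub_sq_eq_zero hμ hrm
  have hdp_neg : deriv h (exp tp) < 0 :=
    hdp ▸ div_neg_of_neg_of_pos (neg_neg_of_pos hsqrt) (by positivity)
  have hdm_pos : 0 < deriv h (exp tm) := hdm ▸ div_pos hsqrt (by positivity)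
  refine ⟨by simp [hh, hrp], by simp [hh, hrm], hdp, hdp_neg, hdm, hdm_pos,
    ⟨_, (sqrt_pos.mpr (neg_pos.mpr hdp_neg)).ne', fun z => ?_⟩,
    ⟨_, _, neg_neg_of_pos (sqrt_pos.mpr hdm_pos), sqrt_pos.mpr hdm_pos, fun z => ?_⟩⟩
  · rw [det_smul_one_sub_of_companion, sq_sub_ofReal_eq_zero_iff_of_neg hdp_neg]
  · rw [det_smul_one_sub_of_companion, sq_sub_ofReal_eq_zero_iff_of_pos hdm_pos]
end

section
/- Let μ ≠ 0 and 0 ≤ ρ ≤ 4μ². The function g(x) := x²·(μ² + ρ(1 − log x)²) is strictly increasing on (0,∞), tends to 0 as x → 0⁺ and to +∞ as x → ∞. Consequently, for every d > 0 there is a unique x₀ > 0 with g(x₀) = d, i.e. each orbit F(x,y) = d of the phase-plane system intersects the x-axis at exactly one point. -/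
/-!
With `s = 1/2 - log x` one computes `g'(x) = 2x((μ² - ρ/4) + ρ s²)`. For `0 ≤ ρ ≤ 4μ²` both
summands are nonnegative and they vanish together at most at `x = e^{1/2}` (only when
`ρ = 4μ²`), so `g` is strictly increasing on `(0, ∞)`. Written as `μ²x² + ρ(x - x log x)²`,
`g` is continuous on all of `ℝ` (since `x log x → 0`) with `g(0) = 0`, and `g ≥ μ²x²`. The
intermediate value theorem and injectivity then give exactly one preimage of each `d > 0`.
-/

open Real Filter Set Topology

/-- `g(x) = F(x,0) = x²(μ² + ρ(1 − log x)²)`, where `F` is the first integral of the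
phase-plane system associated to the curvature energy `Θ_μ` in the 2-space form of
curvature `ρ`. -/
noncomputable def gfun (μ ρ x : ℝ) : ℝ :=
  x ^ 2 * (μ ^ 2 + ρ * (1 - Real.log x) ^ 2)

theorem strictMonoOn_of_deriv_pos_of_ne {D : Set ℝ} (hD : Convex ℝ D) {f : ℝ → ℝ} {c : ℝ}
    (hf : ContinuousOn f D) (hf' : ∀ x ∈ interior D, x ≠ c → 0 < deriv f x) :
    StrictMonoOn f D := by
  intro x hx y hy hxy
  have hxyD : Icc x y ⊆ D := hD.ordConnected.out hx hy
  have lt_of_notMem : ∀ u v, x ≤ u → u < v → v ≤ y → c ∉ Ioo u v → f u < f v := by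
    intro u v hxu huv hvy hc
    have huvD : Icc u v ⊆ D := (Icc_subset_Icc hxu hvy).trans hxyD
    refine strictMonoOn_of_deriv_pos (convex_Icc u v) (hf.mono huvD)
      (fun z hz ↦ hf' z (interior_mono huvD hz) ?_) (left_mem_Icc.2 huv.le)
      (right_mem_Icc.2 huv.le) huv
    rintro rfl
    rw [interior_Icc] at hz
    exact hc hz
  by_cases hc : c ∈ Ioo x y
  · exact (lt_of_notMem x c le_rfl hc.1 hc.2.le (by simp)).trans
      (lt_of_notMem c y hc.1.le hc.2 le_rfl (by simp))
  · exact lt_of_notMem x y le_rfl hxy le_rfl hc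

theorem gfun_eq (μ ρ x : ℝ) : gfun μ ρ x = μ ^ 2 * x ^ 2 + ρ * (x - x * log x) ^ 2 := by
  rw [gfun]; ring

theorem hasDerivAt_gfun (μ ρ : ℝ) {x : ℝ} (hx : 0 < x) :
    HasDerivAt (gfun μ ρ) (2 * x * (μ ^ 2 - ρ / 4 + ρ * (1 / 2 - log x) ^ 2)) x := by
  have hlog : HasDerivAt (fun y ↦ 1 - log y) (-x⁻¹) x := by
    simpa using (hasDerivAt_log hx.ne').const_sub 1
  refine ((hasDerivAt_pow 2 x).mul (((hlog.pow 2).const_mul ρ).const_add (μ ^ 2))).congr_deriv ?_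
  simp only [Pi.pow_apply]
  field_simp
  ring

theorem continuous_gfun (μ ρ : ℝ) : Continuous (gfun μ ρ) := by
  rw [funext (gfun_eq μ ρ)]
  fun_prop

theorem deriv_gfun_pos {μ ρ : ℝ} (hμ : μ ≠ 0) (hρ0 : 0 ≤ ρ) (hρ4 : ρ ≤ 4 * μ ^ 2) {x : ℝ}
    (hx : 0 < x) (hxc : x ≠ exp (1 / 2)) : 0 < deriv (gfun μ ρ) x := by
  rw [(hasDerivAt_gfun μ ρ hx).deriv]
  have hs : 1 / 2 - log x ≠ 0 := fun h ↦ hxc (by rw [← exp_log hx]; congr 1; linarith)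
  refine mul_pos (by positivity) ?_
  rcases hρ0.eq_or_lt with rfl | hρ
  · simp only [zero_div, sub_zero, zero_mul, add_zero]
    positivity
  · have hμρ : 0 ≤ μ ^ 2 - ρ / 4 := by linarith
    exact add_pos_of_nonneg_of_pos hμρ (by positivity)

theorem strictMonoOn_gfun {μ ρ : ℝ} (hμ : μ ≠ 0) (hρ0 : 0 ≤ ρ) (hρ4 : ρ ≤ 4 * μ ^ 2) :
    StrictMonoOn (gfun μ ρ) (Ioi 0) :=
  strictMonoOn_of_deriv_pos_of_ne (convex_Ioi 0) (continuous_gfun μ ρ).continuousOn fun x hx ↦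
    deriv_gfun_pos hμ hρ0 hρ4 (by rwa [interior_Ioi] at hx)

theorem tendsto_gfun_nhdsGT_zero (μ ρ : ℝ) : Tendsto (gfun μ ρ) (𝓝[>] 0) (𝓝 0) := by
  simpa [gfun] using ((continuous_gfun μ ρ).tendsto 0).mono_left nhdsWithin_le_nhds

theorem tendsto_gfun_atTop {μ ρ : ℝ} (hμ : μ ≠ 0) (hρ0 : 0 ≤ ρ) :
    Tendsto (gfun μ ρ) atTop atTop := by
  have hμ2 : 0 < μ ^ 2 := by positivity
  refine tendsto_atTop_mono (fun x ↦ ?_)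
    ((tendsto_pow_atTop two_ne_zero).const_mul_atTop hμ2)
  rw [gfun_eq]
  have := mul_nonneg hρ0 (sq_nonneg (x - x * log x))
  linarith

/-- For `μ ≠ 0` and `0 ≤ ρ ≤ 4μ²`, the function `g(x) = x²(μ² + ρ(1 − log x)²)` is
strictly increasing on `(0,∞)`, tends to `0` as `x → 0⁺` and to `+∞` as `x → ∞`;
consequently for every `d > 0` there is a unique `x₀ > 0` with `g(x₀) = d`, i.e. each
orbit `F(x,y) = d` meets the `x`-axis at exactly one point. -/
theorem orbit_meets_axis_once (μ ρ : ℝ) (hμ : μ ≠ 0) (hρ0 : 0 ≤ ρ) (hρ4 : ρ ≤ 4 * μ ^ 2) :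
    StrictMonoOn (gfun μ ρ) (Set.Ioi 0) ∧
    Filter.Tendsto (gfun μ ρ) (nhdsWithin 0 (Set.Ioi 0)) (nhds 0) ∧
    Filter.Tendsto (gfun μ ρ) Filter.atTop Filter.atTop ∧
    ∀ d : ℝ, 0 < d → ∃! x : ℝ, 0 < x ∧ gfun μ ρ x = d := by
  have hmono := strictMonoOn_gfun hμ hρ0 hρ4
  have hzero := tendsto_gfun_nhdsGT_zero μ ρ
  have htop := tendsto_gfun_atTop hμ hρ0
  refine ⟨hmono, hzero, htop, fun d hd ↦ ?_⟩
  obtain ⟨x, hx, hxd⟩ := isPreconnected_Ioi.intermediate_value_Ioi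
    (le_principal_iff.2 self_mem_nhdsWithin) (le_principal_iff.2 (Ioi_mem_atTop 0))
    (continuous_gfun μ ρ).continuousOn hzero htop hd
  exact ⟨x, ⟨hx, hxd⟩, fun y ⟨hy, hyd⟩ ↦ hmono.injOn hy hx (hyd.trans hxd.symm)⟩
end

section
/- Let c ≠ 0, ρ ∈ ℝ and κ₀ ≠ 0 with cκ₀ ≠ 1. Let G : I → ℝ be a positive, three times differentiable function on a nontrivial interval I satisfying (cκ₀ − 1)·G''(s) = G(s)·(κ₀² − ρ(cκ₀ − 1)) and G'''(s) + (κ₀² + ρ)·G'(s) = 0 for all s ∈ I. Then G is constant on I and κ₀² = ρ(cκ₀ − 1). -/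
/-!
Dividing the astigmatism condition by `cκ₀ - 1` gives `G'' = A G` with a constant `A`, hence
`G''' = A G'`, and the Gauss–Codazzi equation becomes `(A + κ₀² + ρ) G' = 0`. Since
`A + κ₀² + ρ = cκ₀³ / (cκ₀ - 1) ≠ 0`, the derivative `G'` vanishes on the interior of `I`, so `G`
is constant, `G'' = 0`, and `G > 0` forces `κ₀² - ρ(cκ₀ - 1) = 0`.
-/

open Set Filter Topology

theorem Set.OrdConnected.Ioo_subset_interior {I : Set ℝ} (hI : I.OrdConnected) {a b : ℝ}
    (ha : a ∈ I) (hb : b ∈ I) : Ioo a b ⊆ interior I :=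
  isOpen_Ioo.subset_interior_iff.mpr (Ioo_subset_Icc_self.trans (hI.out ha hb))

theorem Set.OrdConnected.interior_nonempty {I : Set ℝ} (hI : I.OrdConnected) {a b : ℝ}
    (ha : a ∈ I) (hb : b ∈ I) (hab : a ≠ b) : (interior I).Nonempty := by
  rcases hab.lt_or_gt with h | h
  · exact (nonempty_Ioo.mpr h).mono (hI.Ioo_subset_interior ha hb)
  · exact (nonempty_Ioo.mpr h).mono (hI.Ioo_subset_interior hb ha)

theorem Set.OrdConnected.apply_eq_of_hasDerivAt_zero {I : Set ℝ} {f : ℝ → ℝ}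
    (hI : I.OrdConnected) (hf : ContinuousOn f I) (hf' : ∀ x ∈ interior I, HasDerivAt f 0 x)
    {x y : ℝ} (hx : x ∈ I) (hy : y ∈ I) : f x = f y := by
  wlog hxy : x < y generalizing x y
  · rcases (not_lt.mp hxy).eq_or_lt with rfl | hyx
    · rfl
    · exact (this hy hx hyx).symm
  obtain ⟨_, _, hslope⟩ := exists_hasDerivAt_eq_slope f (fun _ ↦ 0) hxy
    (hf.mono (hI.out hx hy)) fun z hz ↦ hf' z (hI.Ioo_subset_interior hx hy hz)
  have hdiff := (div_eq_zero_iff.mp hslope.symm).resolve_right (sub_ne_zero.mpr hxy.ne')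
  linarith

theorem deriv_eq_zero_of_deriv_deriv_eq_smul {𝕜 F : Type*} [NontriviallyNormedField 𝕜]
    [NormedAddCommGroup F] [NormedSpace 𝕜 F] {f : 𝕜 → F} {a b x : 𝕜}
    (hf : DifferentiableAt 𝕜 f x) (h₂ : deriv (deriv f) =ᶠ[𝓝 x] a • f)
    (h₃ : deriv (deriv (deriv f)) x + b • deriv f x = 0) (hab : a + b ≠ 0) :
    deriv f x = 0 := by
  rw [h₂.deriv_eq, deriv_const_smul a hf, ← add_smul] at h₃
  exact (smul_eq_zero.mp h₃).resolve_left hab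

theorem constant_curvature_profile_flat_general (c ρ κ₀ : ℝ) (hc : c ≠ 0) (hκ₀ : κ₀ ≠ 0)
    (hcκ : c * κ₀ ≠ 1)
    (I : Set ℝ) (hIconn : I.OrdConnected)
    (hne : ∃ a ∈ I, ∃ b ∈ I, a ≠ b)
    (G : ℝ → ℝ) (hGpos : ∀ s ∈ I, 0 < G s)
    (hG1 : ∀ s ∈ I, DifferentiableAt ℝ G s)
    (hCA : ∀ s ∈ I,
      (c * κ₀ - 1) * deriv (deriv G) s = G s * (κ₀ ^ 2 - ρ * (c * κ₀ - 1)))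
    (hGC : ∀ s ∈ I,
      deriv (deriv (deriv G)) s + (κ₀ ^ 2 + ρ) * deriv G s = 0) :
    (∀ s ∈ I, ∀ t ∈ I, G s = G t) ∧ κ₀ ^ 2 = ρ * (c * κ₀ - 1) := by
  have hsub : c * κ₀ - 1 ≠ 0 := sub_ne_zero.mpr hcκ
  set A := (κ₀ ^ 2 - ρ * (c * κ₀ - 1)) / (c * κ₀ - 1)
  have hGG : ∀ s ∈ I, deriv (deriv G) s = A * G s := fun s hs ↦ by
    rw [div_mul_eq_mul_div, eq_div_iff hsub]
    linear_combination hCA s hs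
  have hA : A + (κ₀ ^ 2 + ρ) ≠ 0 := by
    rw [show A + (κ₀ ^ 2 + ρ) = c * κ₀ ^ 3 / (c * κ₀ - 1) by rw [div_add' _ _ _ hsub]; ring]
    exact div_ne_zero (mul_ne_zero hc (pow_ne_zero 3 hκ₀)) hsub
  have hG' : ∀ s ∈ interior I, deriv G s = 0 := fun s hs ↦
    deriv_eq_zero_of_deriv_deriv_eq_smul (hG1 s (interior_subset hs))
      (eventuallyEq_of_mem (mem_interior_iff_mem_nhds.mp hs) hGG) (hGC s (interior_subset hs)) hA
  refine ⟨fun s hs t ht ↦ hIconn.apply_eq_of_hasDerivAt_zero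
    (fun x hx ↦ (hG1 x hx).continuousAt.continuousWithinAt)
    (fun x hx ↦ hG' x hx ▸ (hG1 x (interior_subset hx)).hasDerivAt) hs ht, ?_⟩
  obtain ⟨a, ha, b, hb, hab⟩ := hne
  obtain ⟨y, hy⟩ := hIconn.interior_nonempty ha hb hab
  have hG'' : deriv (deriv G) y = 0 := by
    rw [(eventuallyEq_of_mem (isOpen_interior.mem_nhds hy) hG').deriv_eq, deriv_const]
  have hCAy := hCA y (interior_subset hy)
  rw [hG'', mul_zero, zero_eq_mul] at hCAy
  linarith [hCAy.resolve_left (hGpos y (interior_subset hy)).ne']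

/-- For a rotational surface of constant astigmatism in a 3-space form of curvature `ρ`
whose profile curve has constant curvature `κ₀`: if the positive, three times
differentiable function `G` (the length of the rotational Killing field) satisfies the
constant astigmatism condition `(cκ₀ − 1)G'' = G(κ₀² − ρ(cκ₀ − 1))` and the
Gauss–Codazzi equation `G''' + (κ₀² + ρ)G' = 0` on a nontrivial interval `I`, then `G` is
constant and `κ₀² = ρ(cκ₀ − 1)`. -/
theorem constant_curvature_profile_flat (c ρ κ₀ : ℝ) (hc : c ≠ 0) (hκ₀ : κ₀ ≠ 0)
    (hcκ : c * κ₀ ≠ 1)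
    (I : Set ℝ) (hIconn : I.OrdConnected)
    (hne : ∃ a ∈ I, ∃ b ∈ I, a ≠ b)
    (G : ℝ → ℝ) (hGpos : ∀ s ∈ I, 0 < G s)
    (hG1 : ∀ s ∈ I, DifferentiableAt ℝ G s)
    (hG2 : ∀ s ∈ I, DifferentiableAt ℝ (deriv G) s)
    (hG3 : ∀ s ∈ I, DifferentiableAt ℝ (deriv (deriv G)) s)
    (hCA : ∀ s ∈ I,
      (c * κ₀ - 1) * deriv (deriv G) s = G s * (κ₀ ^ 2 - ρ * (c * κ₀ - 1)))
    (hGC : ∀ s ∈ I,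
      deriv (deriv (deriv G)) s + (κ₀ ^ 2 + ρ) * deriv G s = 0) :
    (∀ s ∈ I, ∀ t ∈ I, G s = G t) ∧ κ₀ ^ 2 = ρ * (c * κ₀ - 1) :=
  constant_curvature_profile_flat_general c ρ κ₀ hc hκ₀ hcκ I hIconn hne G hGpos hG1 hCA hGC
end

section
/- Let ρ ∈ ℝ, c ≠ 0 and μ = 1/c. Let κ, G : I → ℝ be functions on an interval I such that: κ is continuously differentiable, nowhere zero, with κ'(s) ≠ 0 and cκ(s) ≠ 1 for all s; G is positive and twice differentiable; the function s ↦ (1/κ(s))·(G''(s) + G(s)(κ(s)² + ρ)) is differentiable with derivative κ'(s)·G(s) (the Gauss–Codazzi equation); and (cκ(s) − 1)·G''(s) = G(s)·(κ(s)² − ρ(cκ(s) − 1)) for all s (the constant astigmatism condition). Then there exists a constant C ≠ 0 with G(s) = C·(1 − μ/κ(s))·e^{μ/κ(s)} for all s ∈ I, and κ satisfies the Euler–Lagrange equation EL(μ,ρ): the function s ↦ (1 − μ/κ(s))·e^{μ/κ(s)} is twice differentiable and (d²/ds²)[(1 − μ/κ)e^{μ/κ}] + (ρ(1 − μ/κ)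 − μκ)·e^{μ/κ} = 0 on I. -/
/-!
Constant astigmatism eliminates `G''` from the Gauss–Codazzi quantity:
`(1/κ)(G'' + G(κ² + ρ)) = cGκ²/(cκ − 1)`. Differentiating this, Gauss–Codazzi becomes
the first-order equation `cG'κ²(cκ − 1) = κ'G`, which says that `G` has the same
logarithmic derivative as `P'(κ) = (1 − μ/κ)e^{μ/κ}`, where `P(κ) = κe^{μ/κ}` is the
density of `Θ_μ`. Hence `G = C·P'(κ)` on the interval. The constant astigmatism equation
is linear in `G`, so `P'(κ)` satisfies it as well, and for `P'(κ)` it is exactly `EL(μ,ρ)`.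
-/

open Real Filter Topology Set

/-- `P'(x)` for the density `P(x) = x e^{μ/x}` of the energy `Θ_μ`. -/
noncomputable def energyDensityDeriv (μ x : ℝ) : ℝ := (1 - μ / x) * exp (μ / x)

theorem hasDerivAt_energyDensityDeriv {μ x : ℝ} (hx : x ≠ 0) :
    HasDerivAt (energyDensityDeriv μ) (μ ^ 2 * exp (μ / x) / x ^ 3) x := by
  have hq : HasDerivAt (fun y => μ / y) (-μ / x ^ 2) x := by
    simpa [div_eq_mul_inv, neg_div] using (hasDerivAt_inv hx).const_mul μ
  refine (((hasDerivAt_const x 1).fun_sub hq).fun_mul ((hasDerivAt_exp _).comp x hq)).congr_deriv ?_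
  simp only [Function.comp_apply]
  field_simp
  ring

theorem energyDensityDeriv_ne_zero {μ x : ℝ} (hx : x ≠ 0) (hxμ : x ≠ μ) :
    energyDensityDeriv μ x ≠ 0 := by
  refine mul_ne_zero ?_ (exp_ne_zero _)
  rw [sub_ne_zero, ne_comm, Ne, div_eq_one_iff_eq hx]
  exact hxμ.symm

theorem logDeriv_energyDensityDeriv_comp {μ : ℝ} {κ : ℝ → ℝ} {s : ℝ}
    (hκ : DifferentiableAt ℝ κ s) (hκ0 : κ s ≠ 0) (hκμ : κ s ≠ μ) :
    logDeriv (fun t => energyDensityDeriv μ (κ t)) s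
      = μ ^ 2 * deriv κ s / (κ s ^ 2 * (κ s - μ)) := by
  change deriv (energyDensityDeriv μ ∘ κ) s / _ = _
  rw [((hasDerivAt_energyDensityDeriv hκ0).comp s hκ.hasDerivAt).deriv]
  have hκμ' : κ s - μ ≠ 0 := sub_ne_zero.mpr hκμ
  unfold energyDensityDeriv
  field_simp

theorem Set.EqOn.deriv_eq_const_mul {f g : ℝ → ℝ} {a : ℝ} {s : Set ℝ}
    (h : EqOn f (fun t => a * g t) s) (hs : IsOpen s) :
    EqOn (_root_.deriv f) (fun t => a * _root_.deriv g t) s := by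
  simpa only [deriv_const_mul_field'] using h.deriv hs

section ConstantAstigmatism

variable {ρ c : ℝ} {I : Set ℝ} {κ G : ℝ → ℝ}

theorem gaussCodazzi_quantity_eq {k g g'' : ℝ} (hk : k ≠ 0) (hck : c * k ≠ 1)
    (hCA : (c * k - 1) * g'' = g * (k ^ 2 - ρ * (c * k - 1))) :
    1 / k * (g'' + g * (k ^ 2 + ρ)) = c * g * k ^ 2 / (c * k - 1) := by
  have hck' : c * k - 1 ≠ 0 := sub_ne_zero.mpr hck
  rw [eq_div_iff hck', one_div, inv_mul_eq_div, div_mul_eq_mul_div, div_eq_iff hk]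
  linear_combination hCA

theorem deriv_mul_eq_of_gaussCodazzi (hI : IsOpen I)
    (hκ0 : ∀ s ∈ I, κ s ≠ 0) (hcκ : ∀ s ∈ I, c * κ s ≠ 1)
    (hGC : ∀ s ∈ I,
      HasDerivAt (fun t => (1 / κ t) * (deriv (deriv G) t + G t * ((κ t) ^ 2 + ρ)))
        (deriv κ s * G s) s)
    (hCA : ∀ s ∈ I,
      (c * κ s - 1) * deriv (deriv G) s = G s * ((κ s) ^ 2 - ρ * (c * κ s - 1)))
    {s : ℝ} (hs : s ∈ I) (hκ : DifferentiableAt ℝ κ s) (hG : DifferentiableAt ℝ G s) :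
    c * deriv G s * κ s ^ 2 * (c * κ s - 1) = deriv κ s * G s := by
  have hcκs : c * κ s - 1 ≠ 0 := sub_ne_zero.mpr (hcκ s hs)
  have hquot : HasDerivAt (fun t => c * G t * κ t ^ 2 / (c * κ t - 1))
      (((c * deriv G s * κ s ^ 2 + c * G s * (2 * κ s * deriv κ s)) * (c * κ s - 1)
        - c * G s * κ s ^ 2 * (c * deriv κ s)) / (c * κ s - 1) ^ 2) s := by
    refine HasDerivAt.div ?_ ((hκ.hasDerivAt.const_mul c).sub_const 1) hcκs
    convert (hG.hasDerivAt.const_mul c).fun_mul (hκ.hasDerivAt.fun_pow 2) using 1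
    push_cast
    ring
  have heq : (fun t => c * G t * κ t ^ 2 / (c * κ t - 1)) =ᶠ[𝓝 s]
      fun t => (1 / κ t) * (deriv (deriv G) t + G t * ((κ t) ^ 2 + ρ)) := by
    filter_upwards [hI.mem_nhds hs] with t ht
    exact (gaussCodazzi_quantity_eq (hκ0 t ht) (hcκ t ht) (hCA t ht)).symm
  have hderiv := hquot.unique ((hGC s hs).congr_of_eventuallyEq heq)
  field_simp at hderiv
  linear_combination hderiv

theorem logDeriv_eq_of_deriv_mul_eq (hc : c ≠ 0) {s : ℝ} (hκ0 : κ s ≠ 0)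
    (hcκ : c * κ s ≠ 1) (hG0 : G s ≠ 0)
    (h : c * deriv G s * κ s ^ 2 * (c * κ s - 1) = deriv κ s * G s) :
    logDeriv G s = (1 / c) ^ 2 * deriv κ s / (κ s ^ 2 * (κ s - 1 / c)) := by
  have hcκ' : c * κ s - 1 ≠ 0 := sub_ne_zero.mpr hcκ
  rw [logDeriv_apply]
  field_simp
  linear_combination h

theorem energyDensityDeriv_eulerLagrange (hc : c ≠ 0) {k f'' : ℝ} (hk : k ≠ 0)
    (hck : c * k ≠ 1)
    (h : (c * k - 1) * f'' = energyDensityDeriv (1 / c) k * (k ^ 2 - ρ * (c * k - 1))) :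
    f'' + (ρ * (1 - 1 / c / k) - 1 / c * k) * exp (1 / c / k) = 0 := by
  have hck' : c * k - 1 ≠ 0 := sub_ne_zero.mpr hck
  unfold energyDensityDeriv at h
  field_simp at h ⊢
  linear_combination h

end ConstantAstigmatism

theorem profile_curve_is_critical_general (ρ c : ℝ) (hc : c ≠ 0) (μ : ℝ) (hμ : μ = 1 / c)
    (I : Set ℝ) (hIopen : IsOpen I) (hIconn : I.OrdConnected)
    (κ G : ℝ → ℝ)
    (hκdiff : ∀ s ∈ I, DifferentiableAt ℝ κ s)
    (hκ0 : ∀ s ∈ I, κ s ≠ 0)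
    (hcκ : ∀ s ∈ I, c * κ s ≠ 1)
    (hGpos : ∀ s ∈ I, 0 < G s)
    (hG1 : ∀ s ∈ I, DifferentiableAt ℝ G s)
    (hG2 : ∀ s ∈ I, DifferentiableAt ℝ (deriv G) s)
    (hGC : ∀ s ∈ I,
      HasDerivAt (fun t => (1 / κ t) * (deriv (deriv G) t + G t * ((κ t) ^ 2 + ρ)))
        (deriv κ s * G s) s)
    (hCA : ∀ s ∈ I,
      (c * κ s - 1) * deriv (deriv G) s = G s * ((κ s) ^ 2 - ρ * (c * κ s - 1))) :
    (∃ C : ℝ, C ≠ 0 ∧ ∀ s ∈ I, G s = C * (1 - μ / κ s) * Real.exp (μ / κ s)) ∧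
    (∀ s ∈ I,
      DifferentiableAt ℝ (fun t => (1 - μ / κ t) * Real.exp (μ / κ t)) s ∧
      DifferentiableAt ℝ (deriv (fun t => (1 - μ / κ t) * Real.exp (μ / κ t))) s) ∧
    (∀ s ∈ I,
      deriv (deriv (fun t => (1 - μ / κ t) * Real.exp (μ / κ t))) s
        + (ρ * (1 - μ / κ s) - μ * κ s) * Real.exp (μ / κ s) = 0) := by
  subst hμ
  set φ : ℝ → ℝ := fun t => energyDensityDeriv (1 / c) (κ t)
  have hκμ : ∀ s ∈ I, κ s ≠ 1 / c := fun s hs h => hcκ s hs (by rw [h]; field_simp)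
  have hlog : EqOn (logDeriv G) (logDeriv φ) I := fun s hs => by
    rw [logDeriv_energyDensityDeriv_comp (hκdiff s hs) (hκ0 s hs) (hκμ s hs)]
    exact logDeriv_eq_of_deriv_mul_eq hc (hκ0 s hs) (hcκ s hs) (hGpos s hs).ne'
      (deriv_mul_eq_of_gaussCodazzi hIopen hκ0 hcκ hGC hCA hs (hκdiff s hs) (hG1 s hs))
  obtain ⟨C, hC0, hGφ⟩ := (logDeriv_eqOn_iff (fun s hs => (hG1 s hs).differentiableWithinAt)
    (fun s hs => ((hasDerivAt_energyDensityDeriv (hκ0 s hs)).comp s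
      (hκdiff s hs).hasDerivAt).differentiableAt.differentiableWithinAt)
    hIopen hIconn.isPreconnected (fun s hs => energyDensityDeriv_ne_zero (hκ0 s hs) (hκμ s hs))
    (fun s hs => (hGpos s hs).ne')).mp hlog
  have hφG : EqOn φ (fun t => C⁻¹ * G t) I := fun s hs => by
    simp only [φ, hGφ hs, Pi.smul_apply, smul_eq_mul, Function.comp_apply,
      inv_mul_cancel_left₀ hC0]
  have hφ' := hφG.deriv_eq_const_mul hIopen
  have hφ'' := hφ'.deriv_eq_const_mul hIopen
  refine ⟨⟨C, hC0, fun s hs => ?_⟩, fun s hs => ⟨?_, ?_⟩, fun s hs => ?_⟩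
  · rw [hGφ hs, mul_assoc]
    rfl
  · exact ((hG1 s hs).const_mul C⁻¹).congr_of_eventuallyEq
      (hφG.eventuallyEq_of_mem (hIopen.mem_nhds hs))
  · exact ((hG2 s hs).const_mul C⁻¹).congr_of_eventuallyEq
      (hφ'.eventuallyEq_of_mem (hIopen.mem_nhds hs))
  · refine energyDensityDeriv_eulerLagrange hc (hκ0 s hs) (hcκ s hs) ?_
    change (c * κ s - 1) * deriv (deriv φ) s = φ s * _
    rw [hφ'' hs, hφG hs]
    linear_combination C⁻¹ * hCA s hs

/-- The profile curve of a rotational surface of constant astigmatism `1/κ₁ − 1/κ₂ = c`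
in a 3-space form of curvature `ρ` is a critical curve of the curvature energy
`Θ_μ(γ) = ∫ κ e^{μ/κ}` with `μ = 1/c`: if `κ` (the curvature of the arclength-parametrized
profile curve, with `κ ≠ 0`, `κ' ≠ 0`, `cκ ≠ 1`) and the positive, twice differentiable
function `G` (the length of the rotational Killing field) satisfy the Gauss–Codazzi
equation `(d/ds)[(1/κ)(G'' + G(κ² + ρ))] = κ'G` and the constant astigmatism condition
`(cκ − 1)G'' = G(κ² − ρ(cκ − 1))` on the interval `I`, then `G = C(1 − μ/κ)e^{μ/κ}` for
some constant `C ≠ 0`, the function `(1 − μ/κ)e^{μ/κ}` is twice differentiable, and `κ`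
satisfies the Euler–Lagrange equation `EL(μ,ρ)`. -/
theorem profile_curve_is_critical (ρ c : ℝ) (hc : c ≠ 0) (μ : ℝ) (hμ : μ = 1 / c)
    (I : Set ℝ) (hIopen : IsOpen I) (hIconn : I.OrdConnected)
    (κ G : ℝ → ℝ)
    (hκdiff : ∀ s ∈ I, DifferentiableAt ℝ κ s)
    (hκ'cont : ContinuousOn (deriv κ) I)
    (hκ0 : ∀ s ∈ I, κ s ≠ 0)
    (hκ'0 : ∀ s ∈ I, deriv κ s ≠ 0)
    (hcκ : ∀ s ∈ I, c * κ s ≠ 1)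
    (hGpos : ∀ s ∈ I, 0 < G s)
    (hG1 : ∀ s ∈ I, DifferentiableAt ℝ G s)
    (hG2 : ∀ s ∈ I, DifferentiableAt ℝ (deriv G) s)
    (hGC : ∀ s ∈ I,
      HasDerivAt (fun t => (1 / κ t) * (deriv (deriv G) t + G t * ((κ t) ^ 2 + ρ)))
        (deriv κ s * G s) s)
    (hCA : ∀ s ∈ I,
      (c * κ s - 1) * deriv (deriv G) s = G s * ((κ s) ^ 2 - ρ * (c * κ s - 1))) :
    (∃ C : ℝ, C ≠ 0 ∧ ∀ s ∈ I, G s = C * (1 - μ / κ s) * Real.exp (μ / κ s)) ∧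
    (∀ s ∈ I,
      DifferentiableAt ℝ (fun t => (1 - μ / κ t) * Real.exp (μ / κ t)) s ∧
      DifferentiableAt ℝ (deriv (fun t => (1 - μ / κ t) * Real.exp (μ / κ t))) s) ∧
    (∀ s ∈ I,
      deriv (deriv (fun t => (1 - μ / κ t) * Real.exp (μ / κ t))) s
        + (ρ * (1 - μ / κ s) - μ * κ s) * Real.exp (μ / κ s) = 0) :=
  profile_curve_is_critical_general ρ c hc μ hμ I hIopen hIconn κ G hκdiff hκ0 hcκ hGpos hG1 hG2 hGC
    hCA
end
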